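/- Kleene's inequality holds on (Ĩ, ≤_XY, ¬): for all α, β ∈ Ĩ, min(α, ¬α) ≤_XY max(β, ¬β). -/
import Mathlib


/-- The set of intuitionistic fuzzy values Ĩ = {⟨μ,ν⟩ ∈ [0,1]² : μ + ν ≤ 1}. -/
def IFV : Set (ℝ × ℝ) :=
  {p | 0 ≤ p.1 ∧ p.1 ≤ 1 ∧ 0 ≤ p.2 ∧ p.2 ≤ 1 ∧ p.1 + p.2 ≤ 1}

/-- Score function s(α) = μ_α − ν_α. -/
def sc (p : ℝ × ℝ) : ℝ := p.1 - p.2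

/-- Accuracy function h(α) = μ_α + ν_α. -/
def ac (p : ℝ × ℝ) : ℝ := p.1 + p.2

/-- Strict Xu–Yager order. -/
def ltXY (a b : ℝ × ℝ) : Prop := sc a < sc b ∨ (sc a = sc b ∧ ac a < ac b)

/-- Nonstrict Xu–Yager order. -/
def leXY (a b : ℝ × ℝ) : Prop := sc a < sc b ∨ (sc a = sc b ∧ ac a ≤ ac b)

/-- The strong negation ¬α on IFVs. -/
noncomputable def negIFV (p : ℝ × ℝ) : ℝ × ℝ :=
  if p.2 < p.1 then ((1 - p.1 - p.2) / 2, (1 + p.1 - 3 * p.2) / 2)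
  else if p.1 = p.2 then (1 / 2 - p.1, 1 / 2 - p.2)
  else ((1 + p.2 - 3 * p.1) / 2, (1 - p.1 - p.2) / 2)

open Classical in
/-- Binary minimum with respect to ≤_XY. -/
noncomputable def minXY (a b : ℝ × ℝ) : ℝ × ℝ := if leXY a b then a else b

open Classical in
/-- Binary maximum with respect to ≤_XY. -/
noncomputable def maxXY (a b : ℝ × ℝ) : ℝ × ℝ := if leXY a b then b else a

/-- Kleene's inequality: α ∧ ¬α ≤_XY β ∨ ¬β for all α, β ∈ Ĩ. -/
theorem kleene_inequality (a : ℝ × ℝ) (ha : a ∈ IFV) (b : ℝ × ℝ) (hb : b ∈ IFV) :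
    leXY (minXY a (negIFV a)) (maxXY b (negIFV b)) := by

  have hsneg : ∀ p : ℝ × ℝ, sc (negIFV p) = - sc p := by
    intro p; unfold negIFV sc
    split_ifs <;> simp <;> ring
  have hacneg : ∀ p : ℝ × ℝ, p.1 = p.2 → ac (negIFV p) = 1 - ac p := by
    intro p hp; unfold negIFV ac
    rw [if_neg (by linarith), if_pos hp]; ring
  have hkeyMin : sc (minXY a (negIFV a)) < 0 ∨
      (sc (minXY a (negIFV a)) = 0 ∧ ac (minXY a (negIFV a)) ≤ 1/2) := by
    by_cases h : leXY a (negIFV a)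
    · simp only [minXY, if_pos h]
      rcases h with h | ⟨h1, h2⟩
      · rw [hsneg] at h; left; linarith
      · rw [hsneg] at h1
        have hp0 : sc a = 0 := by linarith
        have hp : a.1 = a.2 := by unfold sc at hp0; linarith
        rw [hacneg a hp] at h2
        exact Or.inr ⟨hp0, by linarith⟩
    · simp only [minXY, if_neg h]
      unfold leXY at h; push_neg at h
      obtain ⟨h1, h2⟩ := h
      rw [hsneg] at h1 h2 ⊢
      rcases lt_or_eq_of_le h1 with h1' | h1'
      · left; linarith
      · have hp0 : sc a = 0 := by linarith
        have hp : a.1 = a.2 := by unfold sc at hp0; linarith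
        have := h2 (by linarith)
        rw [hacneg a hp] at this ⊢
        exact Or.inr ⟨by linarith, by linarith⟩
  have hkeyMax : 0 < sc (maxXY b (negIFV b)) ∨
      (sc (maxXY b (negIFV b)) = 0 ∧ 1/2 ≤ ac (maxXY b (negIFV b))) := by
    by_cases h : leXY b (negIFV b)
    · simp only [maxXY, if_pos h]
      rcases h with h | ⟨h1, h2⟩
      · rw [hsneg] at h ⊢; left; linarith
      · rw [hsneg] at h1
        have hp0 : sc b = 0 := by linarith
        have hp : b.1 = b.2 := by unfold sc at hp0; linarith
        rw [hsneg, hacneg b hp]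
        rw [hacneg b hp] at h2
        exact Or.inr ⟨by linarith, by linarith⟩
    · simp only [maxXY, if_neg h]
      unfold leXY at h; push_neg at h
      obtain ⟨h1, h2⟩ := h
      rw [hsneg] at h1 h2
      rcases lt_or_eq_of_le h1 with h1' | h1'
      · left; linarith
      · have hp0 : sc b = 0 := by linarith
        have hp : b.1 = b.2 := by unfold sc at hp0; linarith
        have := h2 (by linarith)
        rw [hacneg b hp] at this
        exact Or.inr ⟨hp0, by linarith⟩
  unfold leXY
  rcases hkeyMin with h1 | ⟨h1, h1'⟩ <;> rcases hkeyMax with h2 | ⟨h2, h2'⟩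
  · left; linarith
  · left; linarith
  · left; linarith
  · exact Or.inr ⟨by linarith, by linarith⟩
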